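/- There is no coupling of T₃ and T₄ (conditioned Galton–Watson trees with the offspring distribution p₀=p₂=(1-ε)/2, p₁=ε, 0<ε<1/3) such that T₃ ⊆ T₄ almost surely. -/

import Mathlib

/-- Rooted ordered (plane) trees in which every vertex has at most two children. -/
inductive BTree where
  | leaf : BTree
  | one  : BTree → BTree
  | two  : BTree → BTree → BTree
deriving DecidableEq

namespace BTree

/-- Number of vertices. -/
def size : BTree → ℕ
  | leaf => 1
  | one t => 1 + size t
  | two s t => 1 + size s + size t

/-- The Galton–Watson probability of a finite tree: the product over all vertices v
of p_{d(v)}, where d(v) is the outdegree of v. -/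
noncomputable def gwProb (p : ℕ → ℝ) : BTree → ℝ
  | leaf => p 0
  | one t => p 1 * gwProb p t
  | two s t => p 2 * gwProb p s * gwProb p t

/-- `W k t` is the number of vertices of `t` at distance `k` from the root (the profile). -/
def W : ℕ → BTree → ℕ
  | 0, _ => 1
  | _+1, leaf => 0
  | k+1, one t => W k t
  | k+1, two s t => W k s + W k t

end BTree

/-- The offspring distribution p₀ = (1-ε)/2, p₁ = ε, p₂ = (1-ε)/2. -/
noncomputable def offspring (ε : ℝ) : ℕ → ℝ :=
  fun n => if n = 0 then (1 - ε) / 2 else if n = 1 then ε else if n = 2 then (1 - ε) / 2 else 0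

open BTree MeasureTheory

/-- `IsSubtree s t`: the rooted plane tree `s` is a root-preserving subtree of `t`. -/
inductive IsSubtree : BTree → BTree → Prop
  | leaf (t : BTree) : IsSubtree .leaf t
  | one {s t : BTree} : IsSubtree s t → IsSubtree (.one s) (.one t)
  | oneLeft {s t₁ t₂ : BTree} : IsSubtree s t₁ → IsSubtree (.one s) (.two t₁ t₂)
  | oneRight {s t₁ t₂ : BTree} : IsSubtree s t₂ → IsSubtree (.one s) (.two t₁ t₂)
  | two {s₁ s₂ t₁ t₂ : BTree} : IsSubtree s₁ t₁ → IsSubtree s₂ t₂ → IsSubtree (.two s₁ s₂) (.two t₁ t₂)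

/-- Total Galton–Watson probability of all trees with `n` vertices. -/
noncomputable def Z (ε : ℝ) (n : ℕ) : ℝ :=
  ∑' t : BTree, if size t = n then gwProb (offspring ε) t else 0

/-!
If the cherry `two leaf leaf` is a root-preserving subtree of a 4-vertex tree, that tree is one
of the two obtained by hanging a vertex below a leaf of the cherry.
A coupling with `T₃ ⊆ T₄` would therefore give
`P(T₃ = cherry) = (1-ε)²/(4ε² + (1-ε)²) ≤ 2(1-ε)²/(4ε² + 3(1-ε)²)`,
and this fails exactly when `2ε < 1 - ε`.
-/

namespace BTree

def encode : BTree → ℕ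
  | leaf => 0
  | one t => Nat.pair 0 (encode t) + 1
  | two s t => Nat.pair 1 (Nat.pair (encode s) (encode t)) + 1

theorem encode_injective : Function.Injective encode := by
  intro a
  induction a with
  | leaf => intro b hb; cases b <;> simp [encode] at hb ⊢
  | one t ih =>
    intro b hb
    cases b with
    | one u => simp only [encode, Nat.pair_eq_pair, add_left_inj, true_and] at hb; rw [ih hb]
    | _ => simp [encode, Nat.pair_eq_pair] at hb
  | two s t ihs iht =>
    intro b hb
    cases b with
    | two u v =>
      simp only [encode, Nat.pair_eq_pair, add_left_inj, true_and] at hb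
      rw [ihs hb.1, iht hb.2]
    | _ => simp [encode, Nat.pair_eq_pair] at hb

instance : Countable BTree := encode_injective.countable

theorem one_le_size (t : BTree) : 1 ≤ size t := by
  cases t <;> simp only [size] <;> omega

theorem eq_leaf_of_size_eq_one {t : BTree} (h : size t = 1) : t = leaf := by
  cases t with
  | leaf => rfl
  | one u => have := one_le_size u; simp only [size] at h; omega
  | two u v => have := one_le_size u; have := one_le_size v; simp only [size] at h; omega

theorem eq_of_size_eq_two {t : BTree} (h : size t = 2) : t = one leaf := by
  cases t with
  | leaf => simp [size] at h
  | one u => rw [eq_leaf_of_size_eq_one (by simp only [size] at h; omega : size u = 1)]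
  | two u v => have := one_le_size u; have := one_le_size v; simp only [size] at h; omega

theorem mem_of_size_eq_three {t : BTree} (h : size t = 3) :
    t ∈ ({one (one leaf), two leaf leaf} : Finset BTree) := by
  cases t with
  | leaf => simp [size] at h
  | one u => simp [eq_of_size_eq_two (by simp only [size] at h; omega : size u = 2)]
  | two u v =>
    have := one_le_size u; have := one_le_size v
    simp only [size] at h
    simp [eq_leaf_of_size_eq_one (by omega : size u = 1),
      eq_leaf_of_size_eq_one (by omega : size v = 1)]

theorem mem_of_size_eq_four {t : BTree} (h : size t = 4) :
    t ∈ ({one (one (one leaf)), one (two leaf leaf), two (one leaf) leaf, two leaf (one leaf)} :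
      Finset BTree) := by
  cases t with
  | leaf => simp [size] at h
  | one u =>
    have := mem_of_size_eq_three (by simp only [size] at h; omega : size u = 3)
    simp only [Finset.mem_insert, Finset.mem_singleton] at this
    rcases this with rfl | rfl <;> simp
  | two u v =>
    have := one_le_size u; have := one_le_size v
    simp only [size] at h
    obtain ⟨hu, hv⟩ | ⟨hu, hv⟩ :
        size u = 1 ∧ size v = 2 ∨ size u = 2 ∧ size v = 1 := by omega
    · simp [eq_leaf_of_size_eq_one hu, eq_of_size_eq_two hv]
    · simp [eq_of_size_eq_two hu, eq_leaf_of_size_eq_one hv]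

end BTree

theorem Z_eq_sum (ε : ℝ) {n : ℕ} {s : Finset BTree} (hs : ∀ t, size t = n → t ∈ s) :
    Z ε n = ∑ t ∈ s, if size t = n then gwProb (offspring ε) t else 0 :=
  tsum_eq_sum fun t ht => if_neg (mt (hs t) ht)

theorem Z_three (ε : ℝ) : Z ε 3 = (1 - ε) * (4 * ε ^ 2 + (1 - ε) ^ 2) / 8 := by
  rw [Z_eq_sum ε fun _ => mem_of_size_eq_three]
  simp only [Finset.mem_singleton, reduceCtorEq, not_false_eq_true, Finset.sum_insert, size,
    Nat.reduceAdd, ↓reduceIte, gwProb, offspring, one_ne_zero, Finset.sum_singleton,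
    OfNat.ofNat_ne_zero, OfNat.ofNat_ne_one]
  ring

theorem Z_four (ε : ℝ) : Z ε 4 = ε * (1 - ε) * (4 * ε ^ 2 + 3 * (1 - ε) ^ 2) / 8 := by
  rw [Z_eq_sum ε fun _ => mem_of_size_eq_four]
  simp only [Finset.mem_insert, one.injEq, two.injEq, reduceCtorEq, Finset.mem_singleton, or_self,
    and_self, not_false_eq_true, Finset.sum_insert, Finset.sum_singleton, size, Nat.reduceAdd,
    ↓reduceIte, gwProb, offspring, one_ne_zero, OfNat.ofNat_ne_zero, OfNat.ofNat_ne_one]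
  ring

theorem eq_of_isSubtree_cherry {t : BTree} (hsub : IsSubtree (two leaf leaf) t) (ht : size t = 4) :
    t = two (one leaf) leaf ∨ t = two leaf (one leaf) := by
  rcases hsub with _ | _ | _ | _ | @⟨_, _, u, v⟩
  have := one_le_size u; have := one_le_size v
  simp only [size] at ht
  obtain ⟨hu, hv⟩ | ⟨hu, hv⟩ : size u = 2 ∧ size v = 1 ∨ size u = 1 ∧ size v = 2 := by
    omega
  · simp [eq_of_size_eq_two hu, eq_leaf_of_size_eq_one hv]
  · simp [eq_leaf_of_size_eq_one hu, eq_of_size_eq_two hv]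

theorem ae_mem_of_measure_fiber_eq_zero {α Ω : Type*} [Countable α] [MeasurableSpace Ω]
    {μ : Measure Ω} {X : Ω → α} {s : Set α} (h : ∀ a ∉ s, μ {ω | X ω = a} = 0) :
    ∀ᵐ ω ∂μ, X ω ∈ s := by
  rw [ae_iff]
  have : {ω | X ω ∉ s} = ⋃ a : (sᶜ : Set α), {ω | X ω = a} := by ext ω; simp
  rw [this]
  exact measure_iUnion_null fun a => h a a.2

section ConditionedProbabilities

variable {ε : ℝ}

theorem cond_prob_cherry (hε : ε ≠ 1) :
    gwProb (offspring ε) (two leaf leaf) / Z ε 3 =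
      (1 - ε) ^ 2 / (4 * ε ^ 2 + (1 - ε) ^ 2) := by
  have : 1 - ε ≠ 0 := sub_ne_zero.mpr hε.symm
  rw [Z_three]
  simp only [gwProb, offspring, OfNat.ofNat_ne_zero, ↓reduceIte, OfNat.ofNat_ne_one]
  field_simp
  ring

theorem cond_prob_two_one_leaf (hε0 : ε ≠ 0) (hε1 : ε ≠ 1) :
    gwProb (offspring ε) (two (one leaf) leaf) / Z ε 4 =
      (1 - ε) ^ 2 / (4 * ε ^ 2 + 3 * (1 - ε) ^ 2) := by
  have : 1 - ε ≠ 0 := sub_ne_zero.mpr hε1.symm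
  rw [Z_four]
  simp only [gwProb, offspring, OfNat.ofNat_ne_zero, ↓reduceIte, OfNat.ofNat_ne_one, one_ne_zero]
  field_simp
  ring

theorem cond_prob_two_leaf_one (hε0 : ε ≠ 0) (hε1 : ε ≠ 1) :
    gwProb (offspring ε) (two leaf (one leaf)) / Z ε 4 =
      (1 - ε) ^ 2 / (4 * ε ^ 2 + 3 * (1 - ε) ^ 2) := by
  have : 1 - ε ≠ 0 := sub_ne_zero.mpr hε1.symm
  rw [Z_four]
  simp only [gwProb, offspring, OfNat.ofNat_ne_zero, ↓reduceIte, OfNat.ofNat_ne_one, one_ne_zero]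
  field_simp
  ring

theorem two_mul_cond_prob_lt (hε0 : 0 < ε) (hε1 : ε < 1 / 3) :
    2 * ((1 - ε) ^ 2 / (4 * ε ^ 2 + 3 * (1 - ε) ^ 2)) <
      (1 - ε) ^ 2 / (4 * ε ^ 2 + (1 - ε) ^ 2) := by
  have h1 : 0 < 1 - ε := by linarith
  rw [mul_div_assoc', div_lt_div_iff₀ (by positivity) (by positivity)]
  have h2 : 0 < 1 - 3 * ε := by linarith
  have h3 : 0 < 1 + ε := by linarith
  nlinarith [mul_pos (pow_pos h1 2) (mul_pos h2 h3)]

end ConditionedProbabilities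

/-- For 0 < ε < 1/3 there is no coupling of the conditioned Galton–Watson trees T₃ and
T₄ (offspring distribution p₀ = p₂ = (1-ε)/2, p₁ = ε) with T₃ ⊆ T₄ almost surely. -/
theorem no_coupling_T3_T4 (ε : ℝ) (hε0 : 0 < ε) (hε1 : ε < 1 / 3) :
    ¬ ∃ (Ω : Type) (_ : MeasurableSpace Ω) (μ : Measure Ω) (_ : IsProbabilityMeasure μ)
        (S T : Ω → BTree),
      (∀ t : BTree, μ {ω | S ω = t} =
        ENNReal.ofReal (if size t = 3 then gwProb (offspring ε) t / Z ε 3 else 0)) ∧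
      (∀ t : BTree, μ {ω | T ω = t} =
        ENNReal.ofReal (if size t = 4 then gwProb (offspring ε) t / Z ε 4 else 0)) ∧
      (∀ᵐ ω ∂μ, IsSubtree (S ω) (T ω)) := by
  rintro ⟨Ω, _, μ, _, S, T, hS, hT, hsub⟩
  have hT4 : ∀ᵐ ω ∂μ, size (T ω) = 4 :=
    ae_mem_of_measure_fiber_eq_zero (s := {t | size t = 4}) fun t (ht : size t ≠ 4) => by
      rw [hT, if_neg ht, ENNReal.ofReal_zero]
  have hcover : μ {ω | S ω = two leaf leaf} ≤
      μ {ω | T ω = two (one leaf) leaf} + μ {ω | T ω = two leaf (one leaf)} :=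
    calc _ ≤ μ ({ω | T ω = two (one leaf) leaf} ∪ {ω | T ω = two leaf (one leaf)}) :=
          measure_mono_ae <| by
            filter_upwards [hsub, hT4] with ω hω h4 hcherry
            exact eq_of_isSubtree_cherry (hcherry ▸ hω) h4
      _ ≤ _ := measure_union_le _ _
  rw [hS, hT, hT] at hcover
  simp only [size, Nat.reduceAdd, if_true] at hcover
  rw [cond_prob_cherry (by linarith), cond_prob_two_one_leaf hε0.ne' (by linarith),
    cond_prob_two_leaf_one hε0.ne' (by linarith),
    ← ENNReal.ofReal_add (by positivity) (by positivity),
    ENNReal.ofReal_le_ofReal_iff (by positivity)] at hcover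
  linarith [two_mul_cond_prob_lt hε0 hε1]
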